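/- arXiv:2010.14634 — 7 statements merged into one kernel-verified Lean document; each statement's English description precedes it below -/
import Mathlib

section
/- The Cayley graph of the Heisenberg group H_d with connection set S_d = {(e_1,0),...,(e_d,0)} contains no 4-cycles. -/
/-!
Write `s_i = (e_i, 0)`; it is an involution and `g ~ h` iff `h = s_i g`. A 4-cycle through `v`
gives `v = s_l s_k s_j s_i v` with `j ≠ i` and `l ≠ i` (otherwise two vertices of the cycle
coincide). Projecting to `(Z/2)^d` gives `e_i + e_j + e_k + e_l = 0`, forcing `k = i` and `l = j`,
so `s_i` and `s_j` would commute at `v`. They do not: the central coordinates of `s_i s_j v` and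
`s_j s_i v` differ by `β(e_i, e_j) + β(e_j, e_i) = 1`.
-/
namespace Stmt2

/-- The bilinear form `β(x,y) = Σ_{1 ≤ i < j ≤ d} x_i y_j` on `(Z/2)^d`. -/
def β (d : ℕ) (x y : Fin d → ZMod 2) : ZMod 2 :=
  ∑ i : Fin d, ∑ j : Fin d, if i < j then x i * y j else 0

/-- The Heisenberg multiplication `(x,t)(y,s) = (x+y, s+t+β(x,y))` on `H_d`. -/
def mul (d : ℕ) (a b : (Fin d → ZMod 2) × ZMod 2) : (Fin d → ZMod 2) × ZMod 2 :=
  (a.1 + b.1, b.2 + a.2 + β d a.1 b.1)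

/-- The Cayley graph `Cay(H_d, S_d)` with connection set
`S_d = {(e_1,0),…,(e_d,0)}` (each element is its own inverse):
`g ~ h` iff `g = s·h` for some `s ∈ S_d`. -/
def cayley (d : ℕ) : SimpleGraph ((Fin d → ZMod 2) × ZMod 2) :=
  SimpleGraph.fromRel (fun g h => ∃ i : Fin d, mul d (Pi.single i 1, 0) h = g)

theorem _root_.SimpleGraph.Walk.IsCycle.exists_adj_of_length_eq_four {V : Type*}
    {G : SimpleGraph V} {v : V} {c : G.Walk v v} (hc : c.IsCycle) (h4 : c.length = 4) :
    ∃ a b w, G.Adj v a ∧ G.Adj a b ∧ G.Adj b w ∧ G.Adj w v ∧ v ≠ b ∧ a ≠ w := by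
  match c, hc, h4 with
  | .cons hva (.cons hab (.cons hbw (.cons hwv .nil))), hc, _ =>
    have hnd := hc.support_nodup
    simp only [SimpleGraph.Walk.support_cons, SimpleGraph.Walk.support_nil, List.tail_cons,
      List.nodup_cons, List.mem_cons, List.not_mem_nil, not_or] at hnd
    exact ⟨_, _, _, hva, hab, hbw, hwv, fun h => hnd.2.1.2.1 h.symm, hnd.1.2.1⟩

theorem _root_.eq_and_eq_of_single_add_single_add_single_add_single_eq_zero {ι : Type*}
    [DecidableEq ι] {i j k l : ι} (hji : j ≠ i) (hli : l ≠ i)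
    (h : (Pi.single i 1 + Pi.single j 1 + Pi.single k 1 + Pi.single l 1 : ι → ZMod 2) = 0) :
    i = k ∧ j = l := by
  have hki : k = i := by
    by_contra hki
    simpa [hji, hli, hki] using congrFun h i
  subst hki
  refine ⟨rfl, ?_⟩
  by_contra hjl
  simpa [hji, Ne.symm hjl] using congrFun h j

abbrev gen (d : ℕ) (i : Fin d) : (Fin d → ZMod 2) × ZMod 2 := (Pi.single i 1, 0)

lemma β_add_right (d : ℕ) (x y z : Fin d → ZMod 2) : β d x (y + z) = β d x y + β d x z := by
  simp only [β, Pi.add_apply, mul_add, ite_add_zero, Finset.sum_add_distrib]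

lemma β_single_single (d : ℕ) (i j : Fin d) :
    β d (Pi.single i 1) (Pi.single j 1) = if i < j then 1 else 0 := by
  simp only [β]
  rw [Finset.sum_eq_single i, Finset.sum_eq_single j] <;> intros <;> simp_all

lemma β_single_single_ne_swap {d : ℕ} {i j : Fin d} (hij : i ≠ j) :
    β d (Pi.single i 1) (Pi.single j 1) ≠ β d (Pi.single j 1) (Pi.single i 1) := by
  rcases hij.lt_or_gt with h | h <;> simp [β_single_single, h, h.not_gt]

lemma mul_gen_fst (d : ℕ) (i : Fin d) (h : (Fin d → ZMod 2) × ZMod 2) :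
    (mul d (gen d i) h).1 = Pi.single i 1 + h.1 := rfl

lemma mul_gen_mul_gen (d : ℕ) (i : Fin d) (h : (Fin d → ZMod 2) × ZMod 2) :
    mul d (gen d i) (mul d (gen d i) h) = h := by
  have hii : (Pi.single i 1 : Fin d → ZMod 2) + Pi.single i 1 = 0 :=
    funext fun _ => CharTwo.add_self_eq_zero _
  ext
  · simp [mul, ← add_assoc, hii]
  · simp [mul, β_add_right, β_single_single, add_assoc, CharTwo.add_self_eq_zero]

lemma mul_gen_comm_ne {d : ℕ} {i j : Fin d} (hij : i ≠ j) (h : (Fin d → ZMod 2) × ZMod 2) :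
    mul d (gen d i) (mul d (gen d j) h) ≠ mul d (gen d j) (mul d (gen d i) h) := by
  intro hcomm
  have := congrArg Prod.snd hcomm
  simp only [mul, add_zero, β_add_right] at this
  exact β_single_single_ne_swap hij (by linear_combination this)

lemma exists_eq_mul_gen_of_adj {d : ℕ} {g h : (Fin d → ZMod 2) × ZMod 2}
    (hadj : (cayley d).Adj g h) : ∃ i, h = mul d (gen d i) g := by
  obtain ⟨-, ⟨i, hi⟩ | ⟨i, hi⟩⟩ := hadj
  · exact ⟨i, by rw [← hi, mul_gen_mul_gen]⟩
  · exact ⟨i, hi.symm⟩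

/-- `Cay(H_d, S_d)` contains no 4-cycles. -/
theorem stmt2 (d : ℕ) (v : (Fin d → ZMod 2) × ZMod 2)
    (c : (cayley d).Walk v v) (hc : c.IsCycle) : c.length ≠ 4 := by
  intro h4
  obtain ⟨a, b, w, hva, hab, hbw, hwv, hvb, haw⟩ := hc.exists_adj_of_length_eq_four h4
  obtain ⟨i, rfl⟩ := exists_eq_mul_gen_of_adj hva
  obtain ⟨j, rfl⟩ := exists_eq_mul_gen_of_adj hab
  obtain ⟨k, rfl⟩ := exists_eq_mul_gen_of_adj hbw
  obtain ⟨l, hl⟩ := exists_eq_mul_gen_of_adj hwv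
  have hji : j ≠ i := by
    rintro rfl
    exact hvb (mul_gen_mul_gen d j v).symm
  have hli : l ≠ i := by
    rintro rfl
    exact haw ((congrArg (mul d (gen d l)) hl).trans (mul_gen_mul_gen d l _))
  have hsum :
      (Pi.single i 1 + Pi.single j 1 + Pi.single k 1 + Pi.single l 1 : Fin d → ZMod 2) = 0 := by
    have := congrArg Prod.fst hl
    simp only [mul_gen_fst] at this
    linear_combination -this
  obtain ⟨rfl, rfl⟩ := eq_and_eq_of_single_add_single_add_single_add_single_eq_zero hji hli hsum
  refine mul_gen_comm_ne hji.symm v ?_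
  conv_lhs => rw [hl]
  rw [mul_gen_mul_gen, mul_gen_mul_gen]

end Stmt2
end

section
/- For every d ≥ 1 there exists a ±1 signing of the adjacency matrix of the d-dimensional hypercube Q_d such that the product of the signs of the four edges of every 4-cycle in Q_d is -1. -/
/-!
Order the coordinates and give the edge `{v, v + e_i}` the sign `(-1)^(v_0 + ⋯ + v_{i-1})`; this
does not depend on the endpoint, since the two endpoints agree below `i`. Around the square
`v, v + e_i, v + e_i + e_j, v + e_j` with `i < j`, the two `i`-edges have equal signs while the
two `j`-edges have opposite signs, as their endpoints differ in the coordinate `i < j`; so the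
product is `-1`.

To have a symmetric sign on all pairs of vertices, the exponent is written as
`∑_{k < l} u_k v_k (u_l + v_l)` over `ZMod 2`, which reduces to `∑_{k < i} u_k` on the edge
`{u, u + e_i}`.
-/

namespace Stmt4

open Finset

section

variable {ι : Type*} [LinearOrder ι] [LocallyFiniteOrderBot ι]

lemma sum_Iio_add_single (v : ι → ZMod 2) (i j : ι) :
    ∑ k ∈ Iio i, (v + Pi.single j 1 : ι → ZMod 2) k =
      ∑ k ∈ Iio i, v k + if j < i then 1 else 0 := by
  simp [sum_add_distrib, Pi.single_apply]

variable [Fintype ι]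

def cubeSignExp (u v : ι → ZMod 2) : ZMod 2 :=
  ∑ l, ∑ k ∈ Iio l, u k * v k * (u l + v l)

lemma cubeSignExp_comm (u v : ι → ZMod 2) : cubeSignExp u v = cubeSignExp v u := by
  simp only [cubeSignExp, mul_comm (u _), add_comm (u _)]

lemma cubeSignExp_add_single (u : ι → ZMod 2) (i : ι) :
    cubeSignExp u (u + Pi.single i 1) = ∑ k ∈ Iio i, u k := by
  have mul_self : ∀ x : ZMod 2, x * x = x := by decide
  rw [cubeSignExp, sum_eq_single i]
  · refine sum_congr rfl fun k hk => ?_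
    have hki : k ≠ i := (mem_Iio.mp hk).ne
    simp [hki, mul_self, ← add_assoc, CharTwo.add_self_eq_zero]
  · intro l _ hli
    simp [hli, CharTwo.add_self_eq_zero]
  · simp

lemma cubeSignExp_square (v : ι → ZMod 2) {i j : ι} (hij : i ≠ j) :
    cubeSignExp v (v + Pi.single i 1) +
      cubeSignExp (v + Pi.single i 1) (v + Pi.single i 1 + Pi.single j 1) +
      cubeSignExp (v + Pi.single i 1 + Pi.single j 1) (v + Pi.single j 1) +
      cubeSignExp (v + Pi.single j 1) v = 1 := by
  rw [cubeSignExp_add_single, cubeSignExp_add_single, cubeSignExp_comm _ (v + Pi.single j 1),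
    add_right_comm v (Pi.single i 1), cubeSignExp_add_single, cubeSignExp_comm _ v,
    cubeSignExp_add_single, sum_Iio_add_single, sum_Iio_add_single]
  rcases hij.lt_or_gt with h | h <;>
  · simp only [h, h.not_gt, if_true, if_false, add_zero]
    linear_combination
      (∑ k ∈ Iio i, v k + ∑ k ∈ Iio j, v k) * CharTwo.two_eq_zero (R := ZMod 2)

def cubeSigning (u v : ι → ZMod 2) : ℤ :=
  ((-1 : ℤˣ) ^ cubeSignExp u v : ℤˣ)

end

theorem stmt4_general (d : ℕ) :
    ∃ s : (Fin d → ZMod 2) → (Fin d → ZMod 2) → ℤ,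
      (∀ u v, s u v = s v u) ∧
      (∀ u v : Fin d → ZMod 2, (∃ i : Fin d, v = u + Pi.single i 1) →
        s u v = 1 ∨ s u v = -1) ∧
      (∀ (v : Fin d → ZMod 2) (i j : Fin d), i ≠ j →
        s v (v + Pi.single i 1) *
          s (v + Pi.single i 1) (v + Pi.single i 1 + Pi.single j 1) *
          s (v + Pi.single i 1 + Pi.single j 1) (v + Pi.single j 1) *
          s (v + Pi.single j 1) v = -1) := by
  refine ⟨cubeSigning, fun u v => by simp only [cubeSigning, cubeSignExp_comm u v],
    fun u v _ => ?_, fun v i j hij => ?_⟩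
  · rcases Int.units_eq_one_or ((-1 : ℤˣ) ^ cubeSignExp u v) with h | h <;>
      simp [cubeSigning, h]
  · simp only [cubeSigning, ← Units.val_mul, ← uzpow_add, cubeSignExp_square v hij, uzpow_one]
    rfl

/-- For every `d ≥ 1` there is a symmetric `±1` signing of the edges of the
hypercube `Q_d` (vertices `(Z/2)^d`, adjacency: differ in exactly one
coordinate, i.e. `v = u + e_i`) such that the product of the signs around
every 4-cycle `v, v+e_i, v+e_i+e_j, v+e_j` (`i ≠ j`) is `-1`. -/
theorem stmt4 (d : ℕ) (hd : 1 ≤ d) :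
    ∃ s : (Fin d → ZMod 2) → (Fin d → ZMod 2) → ℤ,
      (∀ u v, s u v = s v u) ∧
      (∀ u v : Fin d → ZMod 2, (∃ i : Fin d, v = u + Pi.single i 1) →
        s u v = 1 ∨ s u v = -1) ∧
      (∀ (v : Fin d → ZMod 2) (i j : Fin d), i ≠ j →
        s v (v + Pi.single i 1) *
          s (v + Pi.single i 1) (v + Pi.single i 1 + Pi.single j 1) *
          s (v + Pi.single i 1 + Pi.single j 1) (v + Pi.single j 1) *
          s (v + Pi.single j 1) v = -1) :=
  stmt4_general d

end Stmt4
end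

section
/- Define matrices recursively by A_1 = [[0,1],[1,0]] and A_d = [[A_{d-1}, I],[I, -A_{d-1}]]. Then A_d^2 = d·I for all d ≥ 1. -/
/-! The block square of `[[M, I], [I, -M]]` is `[[M² + I, M - M], [M - M, I + M²]]`, so
`M² = c • I` propagates to `(c + 1) • I`; the reindexing by `Fin` is conjugation by a
permutation and preserves being a scalar matrix. -/

namespace Stmt5

open Matrix

section

variable {m n R : Type*} [Fintype m] [Fintype n] [DecidableEq m] [DecidableEq n]

theorem reindex_sq_eq_smul_one [CommSemiring R] {e : m ≃ n} {M : Matrix m m R} {c : R}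
    (hM : M ^ 2 = c • 1) : reindex e e M ^ 2 = c • 1 := by
  rw [← coe_reindexAlgEquiv R R, ← map_pow, hM, map_smul, map_one]

theorem fromBlocks_one_one_neg_sq [Ring R] {M : Matrix n n R} {c : R} (hM : M ^ 2 = c • 1) :
    fromBlocks M 1 1 (-M) ^ 2 = (c + 1) • 1 := by
  rw [sq, fromBlocks_multiply, neg_mul_neg, ← sq, hM]
  simp only [mul_one, one_mul, add_neg_cancel]
  rw [← fromBlocks_one, fromBlocks_smul, smul_zero, add_smul, one_smul, add_comm 1]

end

theorem swap_fin_two_sq {R : Type*} [Semiring R] :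
    (!![0, 1; 1, 0] : Matrix (Fin 2) (Fin 2) R) ^ 2 = 1 := by
  simp [sq, one_fin_two]

/-- Huang's matrices: `A_1 = [[0,1],[1,0]]`,
`A_{d+1} = [[A_d, I],[I, -A_d]]` (as a block matrix, reindexed so that
`A_{d+1}` is a `2^{d+1} × 2^{d+1}` matrix). Then `A_d ^ 2 = d • I` for all
`d ≥ 1`. -/
theorem stmt5 (A : ∀ d : ℕ, Matrix (Fin (2 ^ d)) (Fin (2 ^ d)) ℝ)
    (h1 : A 1 = Matrix.reindex (finCongr (by norm_num)) (finCongr (by norm_num))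
      !![0, 1; 1, 0])
    (hrec : ∀ d : ℕ, 1 ≤ d → A (d + 1) =
      Matrix.reindex
        (finSumFinEquiv.trans (finCongr (by rw [pow_succ, Nat.mul_two])))
        (finSumFinEquiv.trans (finCongr (by rw [pow_succ, Nat.mul_two])))
        (Matrix.fromBlocks (A d) 1 1 (-(A d)))) :
    ∀ d : ℕ, 1 ≤ d → (A d) ^ 2 = (d : ℝ) • 1 := by
  intro d hd
  induction d, hd using Nat.le_induction with
  | base =>
    rw [h1, Nat.cast_one]
    exact reindex_sq_eq_smul_one (by rw [one_smul, swap_fin_two_sq])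
  | succ d hd ih =>
    rw [hrec d hd, Nat.cast_succ]
    exact reindex_sq_eq_smul_one (fromBlocks_one_one_neg_sq ih)

end Stmt5
end

section
/- Let p be prime. The map κ_− : ((Z/p)^d × (Z/p)^d)² → Z/p defined by κ_−((a,b),(c,d)) = b·c + φ(a_1, c_1) is a 2-cocycle, where φ is the carrying cocycle and a_1, c_1 are the first coordinates of a and c. -/
/-!
Both summands of `κ_−` are 2-cocycles. The dot-product term is a cocycle because it is
bilinear. The carrying cocycle `φ(a, c)` is the carry `⌊(ι a + ι c) / p⌋` of adding the
representatives, and the cocycle identity for it says that the total carry of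
`ι a + ι c + ι e` does not depend on the order in which the additions are done.
-/

namespace Stmt13

/-- The "carrying" cocycle `φ(a,b) = [ι(a)+ι(b) ≥ p]`. -/
def phi (p : ℕ) (a b : ZMod p) : ZMod p :=
  if a.val + b.val < p then 0 else 1

/-- `κ_−((a,b),(c,d)) = b·c + φ(a_1, c_1)`, where `a_1, c_1` are the first
coordinates of `a` and `c` (here `d ≥ 1` via `hd : 0 < d`). -/
def κminus (p d : ℕ) (hd : 0 < d)
    (x y : (Fin d → ZMod p) × (Fin d → ZMod p)) : ZMod p :=
  (∑ i : Fin d, x.2 i * y.1 i) + phi p (x.1 ⟨0, hd⟩) (y.1 ⟨0, hd⟩)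

theorem Nat.mod_add_div_add_div (n a b : ℕ) :
    (a % n + b) / n + a / n = (a + b) / n := by
  rcases n.eq_zero_or_pos with rfl | hn
  · simp
  · conv_rhs => rw [← Nat.mod_add_div a n, add_right_comm, Nat.add_mul_div_left _ _ hn]

theorem phi_eq_cast_div (p : ℕ) [NeZero p] (a b : ZMod p) :
    phi p a b = (((a.val + b.val) / p : ℕ) : ZMod p) := by
  unfold phi
  split_ifs with h
  · rw [Nat.div_eq_of_lt h, Nat.cast_zero]
  · have hp : 0 < p := Nat.pos_of_neZero p
    have hlt : a.val + b.val < 2 * p := by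
      linarith [ZMod.val_lt a, ZMod.val_lt b]
    rw [Nat.div_eq_of_lt_le (by omega) hlt, Nat.cast_one]

theorem phi_cocycle (p : ℕ) (a c e : ZMod p) :
    phi p (a + c) e + phi p a c = phi p a (c + e) + phi p c e := by
  cases p with
  | zero => simp [phi] -- `ZMod 0 = ℤ`, where `φ` is constantly `1`
  | succ n =>
    simp only [phi_eq_cast_div, ZMod.val_add, ← Nat.cast_add]
    rw [Nat.mod_add_div_add_div, add_comm a.val ((c.val + e.val) % (n + 1)),
      Nat.mod_add_div_add_div, add_rotate]

theorem stmt13_general (p d : ℕ) (hd : 0 < d) :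
    ∀ x y z : (Fin d → ZMod p) × (Fin d → ZMod p),
      κminus p d hd (x + y) z + κminus p d hd x y =
        κminus p d hd x (y + z) + κminus p d hd y z := by
  intro x y z
  simp only [κminus, Prod.fst_add, Prod.snd_add, Pi.add_apply, add_mul, mul_add,
    Finset.sum_add_distrib]
  linear_combination phi_cocycle p (x.1 ⟨0, hd⟩) (y.1 ⟨0, hd⟩) (z.1 ⟨0, hd⟩)

/-- `κ_−` is a 2-cocycle: `κ(x+y,z) + κ(x,y) = κ(x,y+z) + κ(y,z)`. -/
theorem stmt13 (p d : ℕ) (hp : p.Prime) (hd : 0 < d) :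
    ∀ x y z : (Fin d → ZMod p) × (Fin d → ZMod p),
      κminus p d hd (x + y) z + κminus p d hd x y =
        κminus p d hd x (y + z) + κminus p d hd y z :=
  stmt13_general p d hd

end Stmt13
end

section
/- In the group G on (Z/p)^d × (Z/p)^d × Z/p with multiplication (a,b,z)(c,d,w) = (a+c, b+d, z+w+b·c+φ(a_1,c_1)), the commutator of (a,b,z) and (c,d,w) equals (0,0, b·c − a·d); in particular it agrees with the commutator of the exponent-p extraspecial group. -/
namespace Stmt14

/-- The "carrying" cocycle `φ(a,b) = [ι(a)+ι(b) ≥ p]`. -/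
def phi (p : ℕ) (a b : ZMod p) : ZMod p :=
  if a.val + b.val < p then 0 else 1

/-- The multiplication `(a,b,z)(c,d,w) = (a+c, b+d, z+w+b·c+φ(a_1,c_1))`. -/
def mmul (p d : ℕ) (hd : 0 < d)
    (g h : (Fin d → ZMod p) × (Fin d → ZMod p) × ZMod p) :
    (Fin d → ZMod p) × (Fin d → ZMod p) × ZMod p :=
  (g.1 + h.1, g.2.1 + h.2.1,
    g.2.2 + h.2.2 + (∑ i : Fin d, g.2.1 i * h.1 i) + phi p (g.1 ⟨0, hd⟩) (h.1 ⟨0, hd⟩))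

def carry (p : ℕ) (x y : ZMod p) : ℕ :=
  if x.val + y.val < p then 0 else 1

lemma phi_eq_carry (p : ℕ) (x y : ZMod p) : phi p x y = carry p x y := by
  unfold phi carry
  split_ifs <;> simp

lemma phi_comm (p : ℕ) (x y : ZMod p) : phi p x y = phi p y x := by
  unfold phi
  rw [Nat.add_comm]

lemma val_add_val_eq (p : ℕ) [NeZero p] (x y : ZMod p) :
    x.val + y.val = (x + y).val + p * carry p x y := by
  have hx := ZMod.val_lt x
  have hy := ZMod.val_lt y
  rw [ZMod.val_add, carry]
  split_ifs with h
  · rw [Nat.mod_eq_of_lt h]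
    omega
  · rw [Nat.mod_eq_sub_mod (by omega), Nat.mod_eq_of_lt (by omega)]
    omega

/-- Adding the three values `ι(-a) + ι(-c) + ι(a)` in two ways: the carries on the left
together make up the single carry of `ι(a) + ι(-a) = p·[a ≠ 0]`. -/
lemma carry_neg_add_carry (p : ℕ) [NeZero p] (a c : ZMod p) :
    carry p (-a) (-c) + carry p (-a + -c) a = carry p a (-a) := by
  have h₁ := val_add_val_eq p (-a) (-c)
  have h₂ := val_add_val_eq p (-a + -c) a
  have h₃ := val_add_val_eq p a (-a)
  rw [show -a + -c + a = -c by ring] at h₂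
  rw [add_neg_cancel, ZMod.val_zero] at h₃
  apply Nat.eq_of_mul_eq_mul_left (Nat.pos_of_neZero p)
  rw [Nat.mul_add]
  omega

lemma phi_neg_add_phi (p : ℕ) [NeZero p] (a c : ZMod p) :
    phi p (-a) (-c) + phi p (-a + -c) a = phi p a (-a) := by
  simp only [phi_eq_carry, ← Nat.cast_add, carry_neg_add_carry]

lemma eq_of_mmul_eq_zero {p d : ℕ} {hd : 0 < d}
    {g gi : (Fin d → ZMod p) × (Fin d → ZMod p) × ZMod p}
    (h : mmul p d hd g gi = (0, 0, 0)) :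
    gi = (-g.1, -g.2.1,
      -g.2.2 + (∑ i : Fin d, g.2.1 i * g.1 i) - phi p (g.1 ⟨0, hd⟩) (-g.1 ⟨0, hd⟩)) := by
  simp only [mmul, Prod.mk.injEq] at h
  obtain ⟨h₁, h₂, h₃⟩ := h
  have hgi₁ : gi.1 = -g.1 := eq_neg_of_add_eq_zero_right h₁
  have hgi₂ : gi.2.1 = -g.2.1 := eq_neg_of_add_eq_zero_right h₂
  rw [hgi₁] at h₃
  simp only [Pi.neg_apply, mul_neg, Finset.sum_neg_distrib] at h₃
  ext1
  · exact hgi₁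
  ext1
  · exact hgi₂
  · linear_combination h₃

/-- In the group with the carrying multiplication, the commutator
`[g,h] = g⁻¹h⁻¹gh` of `g = (a,b,z)` and `h = (c,d,w)` equals
`(0, 0, b·c − a·d)`, the same as in the exponent-`p` extraspecial group.
Here `gi, hi` are the inverses of `g, h`. -/
theorem stmt14 (p d : ℕ) (hp : p.Prime) (hd : 0 < d)
    (g h gi hi : (Fin d → ZMod p) × (Fin d → ZMod p) × ZMod p)
    (hg : mmul p d hd g gi = (0, 0, 0) ∧ mmul p d hd gi g = (0, 0, 0))
    (hh : mmul p d hd h hi = (0, 0, 0) ∧ mmul p d hd hi h = (0, 0, 0)) :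
    mmul p d hd (mmul p d hd (mmul p d hd gi hi) g) h =
      (0, 0, (∑ i : Fin d, g.2.1 i * h.1 i) - ∑ i : Fin d, g.1 i * h.2.1 i) := by
  have : NeZero p := ⟨hp.ne_zero⟩
  rw [eq_of_mmul_eq_zero hg.1, eq_of_mmul_eq_zero hh.1]
  set a := g.1 ⟨0, hd⟩
  set c := h.1 ⟨0, hd⟩
  have hcarry := phi_neg_add_phi p a c
  have hsym : ∑ i : Fin d, h.2.1 i * g.1 i = ∑ i : Fin d, g.1 i * h.2.1 i :=
    Finset.sum_congr rfl fun i _ => mul_comm _ _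
  simp only [mmul, Prod.mk.injEq, Pi.add_apply, Pi.neg_apply, neg_mul, mul_neg, add_mul,
    Finset.sum_add_distrib, Finset.sum_neg_distrib]
  refine ⟨by abel, by abel, ?_⟩
  rw [show -a + -c + a = -c by ring, phi_comm p (-c) c]
  linear_combination hcarry - hsym

end Stmt14
end

section
/- Let p be an odd prime and let G be the group on (Z/p)^d × (Z/p)^d × Z/p with multiplication (a,b,z)(c,d,w) = (a+c, b+d, z+w+b·c+φ(a_1,c_1)). Let v = (1,0,...,0) ∈ (Z/p)^d. Then (v,0,0)^p = (0,0,1), so (v,0,0) has order p², and G has exponent p². -/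
/-! By induction on `n`, `g^n = (n a, n b, n z + C(n,2) (b ⬝ a) + ⌊n ι(a₁)/p⌋)`: the cocycle `φ`
records the carries when `a₁` is added to itself, and `n` such additions carry `⌊n ι(a₁)/p⌋` times.
For `g = (v,0,0)` this reads `g^n = (n v, 0, ⌊n/p⌋)`, which vanishes only when `p² ∣ n`. For
`n = p²` every term vanishes, the middle one because `p ∣ C(p²,2)` when `p` is odd. -/

namespace Stmt15

/-- The "carrying" cocycle `φ(a,b) = [ι(a)+ι(b) ≥ p]`. -/
def phi (p : ℕ) (a b : ZMod p) : ZMod p :=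
  if a.val + b.val < p then 0 else 1

/-- The multiplication `(a,b,z)(c,d,w) = (a+c, b+d, z+w+b·c+φ(a_1,c_1))`. -/
def mmul (p d : ℕ) (hd : 0 < d)
    (g h : (Fin d → ZMod p) × (Fin d → ZMod p) × ZMod p) :
    (Fin d → ZMod p) × (Fin d → ZMod p) × ZMod p :=
  (g.1 + h.1, g.2.1 + h.2.1,
    g.2.2 + h.2.2 + (∑ i : Fin d, g.2.1 i * h.1 i) + phi p (g.1 ⟨0, hd⟩) (h.1 ⟨0, hd⟩))

/-- `g ^ n`: left multiplication by `g` iterated `n` times on `(0,0,0)`. -/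
def mpow (p d : ℕ) (hd : 0 < d)
    (g : (Fin d → ZMod p) × (Fin d → ZMod p) × ZMod p) (n : ℕ) :
    (Fin d → ZMod p) × (Fin d → ZMod p) × ZMod p :=
  (fun x => mmul p d hd g x)^[n] (0, 0, 0)

end Stmt15

lemma ZMod.val_nsmul {p : ℕ} (n : ℕ) (a : ZMod p) : (n • a).val = n * a.val % p := by
  rw [nsmul_eq_mul, ZMod.val_mul, ZMod.val_natCast, Nat.mod_mul_mod]

lemma Nat.add_one_mul_div (n v p : ℕ) : (n + 1) * v / p = n * v / p + (v + n * v % p) / p := by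
  rcases p.eq_zero_or_pos with rfl | hp
  · simp
  conv_lhs => rw [add_one_mul, ← Nat.div_add_mod (n * v) p]
  rw [add_assoc, Nat.mul_add_div hp, add_comm (n * v % p)]

lemma Odd.dvd_choose_two {m : ℕ} (hm : Odd m) : m ∣ m.choose 2 := by
  obtain ⟨k, rfl⟩ := hm
  exact ⟨k, by rw [Nat.choose_two_right, add_tsub_cancel_right, mul_comm, mul_assoc,
    Nat.mul_div_cancel_left _ two_pos, mul_comm]⟩

namespace Stmt15

lemma phi_eq_natCast_div {p : ℕ} [NeZero p] (a b : ZMod p) :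
    phi p a b = (((a.val + b.val) / p : ℕ) : ZMod p) := by
  unfold phi
  split_ifs with h
  · rw [Nat.div_eq_of_lt h, Nat.cast_zero]
  · have hab : a.val + b.val < 2 * p := by linarith [a.val_lt, b.val_lt]
    rw [Nat.div_eq_of_lt_le (k := 1) (by omega) (by omega), Nat.cast_one]

lemma mpow_succ (p d : ℕ) (hd : 0 < d) (g : (Fin d → ZMod p) × (Fin d → ZMod p) × ZMod p)
    (n : ℕ) :
    mpow p d hd g (n + 1) = mmul p d hd g (mpow p d hd g n) :=
  Function.iterate_succ_apply' _ _ _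

lemma mpow_eq (p d : ℕ) [NeZero p] (hd : 0 < d)
    (g : (Fin d → ZMod p) × (Fin d → ZMod p) × ZMod p) (n : ℕ) :
    mpow p d hd g n = (n • g.1, n • g.2.1,
      n • g.2.2 + (n.choose 2 : ZMod p) * (g.2.1 ⬝ᵥ g.1)
        + ((n * (g.1 ⟨0, hd⟩).val / p : ℕ) : ZMod p)) := by
  induction n with
  | zero => simp [mpow]
  | succ n ih =>
    rw [mpow_succ, ih]
    refine Prod.ext (succ_nsmul' _ _).symm (Prod.ext (succ_nsmul' _ _).symm ?_)
    change g.2.2 + _ + g.2.1 ⬝ᵥ (n • g.1) + phi p (g.1 ⟨0, hd⟩) (n • g.1 ⟨0, hd⟩) = _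
    rw [dotProduct_smul, phi_eq_natCast_div, ZMod.val_nsmul, Nat.add_one_mul_div,
      Nat.choose_succ_succ', Nat.choose_one_right, succ_nsmul]
    push_cast
    ring

lemma mpow_single_one (p d : ℕ) [Fact (1 < p)] (hd : 0 < d) (n : ℕ) :
    mpow p d hd (Pi.single ⟨0, hd⟩ 1, 0, 0) n =
      (n • Pi.single ⟨0, hd⟩ 1, 0, ((n / p : ℕ) : ZMod p)) := by
  simp [mpow_eq, ZMod.val_one]

lemma mpow_char_sq_eq_zero (p d : ℕ) (hp : Odd p) (hd : 0 < d)
    (g : (Fin d → ZMod p) × (Fin d → ZMod p) × ZMod p) : mpow p d hd g (p ^ 2) = (0, 0, 0) := by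
  have : NeZero p := ⟨hp.pos.ne'⟩
  have hchoose : (((p ^ 2).choose 2 : ℕ) : ZMod p) = 0 :=
    (ZMod.natCast_eq_zero_iff _ _).2
      ((dvd_pow_self p two_ne_zero).trans (Odd.dvd_choose_two hp.pow))
  have hcarry : p ^ 2 * (g.1 ⟨0, hd⟩).val / p = p * (g.1 ⟨0, hd⟩).val := by
    rw [sq, mul_assoc, Nat.mul_div_cancel_left _ hp.pos]
  rw [mpow_eq, hchoose, hcarry, sq, mul_nsmul, mul_nsmul, mul_nsmul]
  simp only [ZModModule.char_nsmul_eq_zero p, zero_mul, Nat.cast_mul,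
    ZMod.natCast_self, add_zero]

/-- For `v = (1,0,…,0)` we have `(v,0,0)^p = (0,0,1)`, so `(v,0,0)` has
order `p²`; moreover every element satisfies `g^{p²} = 1`, so the group has
exponent `p²`. -/
theorem stmt15 (p d : ℕ) (hp : p.Prime) (hodd : Odd p) (hd : 0 < d) :
    mpow p d hd (Pi.single (⟨0, hd⟩ : Fin d) (1 : ZMod p), 0, 0) p = (0, 0, 1) ∧
    (∀ n : ℕ, 0 < n → n < p ^ 2 →
      mpow p d hd (Pi.single (⟨0, hd⟩ : Fin d) (1 : ZMod p), 0, 0) n ≠ (0, 0, 0)) ∧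
    (∀ g : (Fin d → ZMod p) × (Fin d → ZMod p) × ZMod p,
      mpow p d hd g (p ^ 2) = (0, 0, 0)) := by
  have : Fact (1 < p) := ⟨hp.one_lt⟩
  refine ⟨?_, fun n hn hnp h => ?_, mpow_char_sq_eq_zero p d hodd hd⟩
  · rw [mpow_single_one, ZModModule.char_nsmul_eq_zero, Nat.div_self hp.pos, Nat.cast_one]
  · rw [mpow_single_one, Prod.mk.injEq, Prod.mk.injEq] at h
    obtain ⟨hv, -, hz⟩ := h
    have hpn : p ∣ n := (ZMod.natCast_eq_zero_iff _ _).1 (by simpa using congrFun hv ⟨0, hd⟩)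
    have hpq : p ∣ n / p := (ZMod.natCast_eq_zero_iff _ _).1 hz
    have hp2n : p ^ 2 ∣ n := by
      rw [sq, ← Nat.div_mul_cancel hpn]
      exact mul_dvd_mul_right hpq p
    exact (Nat.le_of_dvd hn hp2n).not_gt hnp

end Stmt15
end

section
/- Let p be an odd prime, d ≥ 1, and in (Z/p)^d × (Z/p)^d define A = { Σ_{i≤k} e_i + Σ_{j≤k−1} f_j : 1 ≤ k ≤ d } and B = { Σ_{i≤k−1} e_i + 2e_k + Σ_{j≤k} f_j : 1 ≤ k ≤ d }, where e_1,...,e_d,f_1,...,f_d is the standard basis. Then S = A ∪ B is a basis of the 2d-dimensional vector space (Z/p)^{2d}. -/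
/-! With `u_k = (e_k, f_k)` one has `b_k - a_k = u_k` and `a_k = (e_k, 0) + Σ_{i<k} u_i`, so the
span of `S` contains every `(e_k, 0)` and `(0, f_k)`. A spanning family of `2d` vectors in a free
module of rank `2d` over the commutative ring `ZMod p`, `p > 1`, is linearly independent. -/

namespace Stmt16

/-- `a_k = Σ_{i ≤ k} e_i + Σ_{j ≤ k-1} f_j` (0-indexed: `e`-part has 1's in
positions `≤ k`, `f`-part has 1's in positions `< k`). -/
def aVec (p d : ℕ) (k : Fin d) : (Fin d → ZMod p) × (Fin d → ZMod p) :=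
  (fun i => if i ≤ k then 1 else 0, fun j => if j < k then 1 else 0)

/-- `b_k = Σ_{i ≤ k-1} e_i + 2 e_k + Σ_{j ≤ k} f_j`. -/
def bVec (p d : ℕ) (k : Fin d) : (Fin d → ZMod p) × (Fin d → ZMod p) :=
  (fun i => if i < k then 1 else if i = k then 2 else 0,
   fun j => if j ≤ k then 1 else 0)

/-- The family `S = A ∪ B` of `2d` vectors. -/
def sVec (p d : ℕ) : Fin d ⊕ Fin d → (Fin d → ZMod p) × (Fin d → ZMod p) :=
  Sum.elim (aVec p d) (bVec p d)

variable (p : ℕ) {d : ℕ}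

theorem bVec_sub_aVec (k : Fin d) :
    bVec p d k - aVec p d k = (Pi.single k 1, Pi.single k 1) := by
  ext j <;> simp [aVec, bVec, Pi.single_apply] <;> grind

theorem aVec_eq_single_add_sum (k : Fin d) :
    aVec p d k = (Pi.single k 1, 0) +
      ∑ i ∈ Finset.Iio k, ((Pi.single i 1, Pi.single i 1) : (Fin d → ZMod p) × (Fin d → ZMod p)) := by
  ext j <;> simp [aVec, Prod.fst_sum, Prod.snd_sum, Pi.single_apply, Finset.sum_apply]
  grind

theorem single_single_mem_span (k : Fin d) :
    (Pi.single k (1 : ZMod p), Pi.single k 1) ∈ Submodule.span (ZMod p) (Set.range (sVec p d)) := by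
  rw [← bVec_sub_aVec]
  exact sub_mem (Submodule.subset_span ⟨.inr k, rfl⟩) (Submodule.subset_span ⟨.inl k, rfl⟩)

theorem single_zero_mem_span (k : Fin d) :
    (Pi.single k (1 : ZMod p), 0) ∈ Submodule.span (ZMod p) (Set.range (sVec p d)) := by
  rw [eq_sub_of_add_eq (aVec_eq_single_add_sum p k).symm]
  exact sub_mem (Submodule.subset_span ⟨.inl k, rfl⟩)
    (Submodule.sum_mem _ fun i _ => single_single_mem_span p i)

theorem zero_single_mem_span (k : Fin d) :
    (0, Pi.single k (1 : ZMod p)) ∈ Submodule.span (ZMod p) (Set.range (sVec p d)) := by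
  have h := sub_mem (single_single_mem_span p k) (single_zero_mem_span p k)
  rwa [Prod.mk_sub_mk, sub_self, sub_zero] at h

theorem span_range_sVec : Submodule.span (ZMod p) (Set.range (sVec p d)) = ⊤ := by
  rw [eq_top_iff, ← ((Pi.basisFun (ZMod p) (Fin d)).prod (Pi.basisFun (ZMod p) (Fin d))).span_eq,
    Submodule.span_le]
  rintro _ ⟨k | k, rfl⟩
  · simpa using single_zero_mem_span p k
  · simpa using zero_single_mem_span p k

theorem linearIndependent_sVec [Fact (1 < p)] : LinearIndependent (ZMod p) (sVec p d) :=
  linearIndependent_of_top_le_span_of_card_eq_finrank (span_range_sVec p).ge (by simp)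

theorem stmt16_general (p d : ℕ) [Fact p.Prime] :
    LinearIndependent (ZMod p) (sVec p d) ∧
      Submodule.span (ZMod p) (Set.range (sVec p d)) = ⊤ :=
  ⟨linearIndependent_sVec p, span_range_sVec p⟩

/-- For `p` an odd prime and `d ≥ 1`, `S = A ∪ B` is a basis of the
`2d`-dimensional vector space `(Z/p)^{2d} = (Z/p)^d × (Z/p)^d`. -/
theorem stmt16 (p d : ℕ) (hp : p.Prime) [Fact p.Prime] (hodd : Odd p) (hd : 1 ≤ d) :
    LinearIndependent (ZMod p) (sVec p d) ∧
      Submodule.span (ZMod p) (Set.range (sVec p d)) = ⊤ :=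
  stmt16_general p d

end Stmt16
end
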